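/- Let G be a k-critical graph that is not a complete graph. Then G has no clique cutset; that is, there is no clique C of G such that the graph obtained from G by deleting the vertices of C is disconnected (or has fewer than one component's worth of interaction, i.e., C separates G). -/

import Mathlib

open SimpleGraph

/-- A graph is `k`-critical if its chromatic number equals `k` and every proper
induced subgraph is `(k-1)`-colorable. -/
def IsKCritical {V : Type*} (G : SimpleGraph V) (k : ℕ) : Prop :=
  G.chromaticNumber = k ∧ ∀ s : Set V, s ≠ Set.univ → (G.induce s).Colorable (k - 1)

/-- A set `X` of vertices is a module if every vertex outside `X` is adjacent
either to all vertices of `X` or to none of them. -/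
def IsModule {V : Type*} (G : SimpleGraph V) (X : Set V) : Prop :=
  ∀ v ∉ X, (∀ x ∈ X, G.Adj v x) ∨ (∀ x ∈ X, ¬ G.Adj v x)

/-- `G` contains no induced subgraph isomorphic to `H`. -/
def InducedFree {V W : Type*} (G : SimpleGraph V) (H : SimpleGraph W) : Prop :=
  ¬ ∃ s : Set V, Nonempty ((G.induce s) ≃g H)

/-- `G` is (P5, P5-bar)-free. -/
def P5P5barFree {V : Type*} (G : SimpleGraph V) : Prop :=
  InducedFree G (pathGraph 5) ∧ InducedFree G (pathGraph 5)ᶜ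

/-- A buoy in `G` given by its five non-empty bags. -/
structure IsBuoy {V : Type*} (G : SimpleGraph V) (B : Fin 5 → Set V) : Prop where
  nonempty : ∀ i, (B i).Nonempty
  disjoint : ∀ i j, i ≠ j → Disjoint (B i) (B j)
  adj_next : ∀ i, ∀ x ∈ B i, ∀ y ∈ B (i + 1), G.Adj x y
  not_adj_skip : ∀ i, ∀ x ∈ B i, ∀ y ∈ B (i + 2), ¬ G.Adj x y

/-- `G` is a pseudo-buoy with (possibly empty) bags `B 0, …, B 4` partitioning
its vertex set. -/
structure IsPseudoBuoy {V : Type*} (G : SimpleGraph V) (B : Fin 5 → Set V) : Prop where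
  cover : (⋃ i, B i) = Set.univ
  disjoint : ∀ i j, i ≠ j → Disjoint (B i) (B j)
  adj_next : ∀ i, ∀ x ∈ B i, ∀ y ∈ B (i + 1), G.Adj x y
  not_adj_skip : ∀ i, ∀ x ∈ B i, ∀ y ∈ B (i + 2), ¬ G.Adj x y

/-- The graph obtained from `G` by substituting `H` for the module `M`. -/
def substitute {V W : Type*} (G : SimpleGraph V) (M : Set V) (H : SimpleGraph W) :
    SimpleGraph ({v : V // v ∉ M} ⊕ W) where
  Adj x y :=
    match x, y with
    | Sum.inl a, Sum.inl b => G.Adj a b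
    | Sum.inl a, Sum.inr _ => ∃ m ∈ M, G.Adj a m
    | Sum.inr _, Sum.inl b => ∃ m ∈ M, G.Adj b m
    | Sum.inr a, Sum.inr b => H.Adj a b
  symm := ⟨by
    rintro (a | a) (b | b) h
    · exact G.adj_symm h
    · exact h
    · exact h
    · exact H.adj_symm h⟩
  loopless := ⟨by
    rintro (a | a) h
    · exact G.ne_of_adj h rfl
    · exact H.ne_of_adj h rfl⟩

/-- The join of two graphs. -/
def joinGraph {V W : Type*} (G : SimpleGraph V) (H : SimpleGraph W) :
    SimpleGraph (V ⊕ W) where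
  Adj x y :=
    match x, y with
    | Sum.inl a, Sum.inl b => G.Adj a b
    | Sum.inl _, Sum.inr _ => True
    | Sum.inr _, Sum.inl _ => True
    | Sum.inr a, Sum.inr b => H.Adj a b
  symm := ⟨by
    rintro (a | a) (b | b) h
    · exact G.adj_symm h
    · trivial
    · trivial
    · exact H.adj_symm h⟩
  loopless := ⟨by
    rintro (a | a) h
    · exact G.ne_of_adj h rfl
    · exact H.ne_of_adj h rfl⟩


/-!
Split `G` along the clique cutset `C` into two proper induced subgraphs `G[A ∪ C]` and
`G[V ∖ A]`, where `A` is one component of `G - C`. By criticality both are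
`(k-1)`-colorable. Both colorings are injective on the clique `C`, so after permuting the
colors of the second one they agree on `C` and glue to a `(k-1)`-coloring of `G`.
-/

open Set

namespace SimpleGraph

variable {V α : Type*} {G : SimpleGraph V}

structure IsSeparation (G : SimpleGraph V) (s₁ s₂ : Set V) : Prop where
  union_eq : s₁ ∪ s₂ = univ
  adj : ∀ x y, G.Adj x y → x ∈ s₁ ∧ y ∈ s₁ ∨ x ∈ s₂ ∧ y ∈ s₂

lemma Coloring.injective_of_isClique {s K : Set V} (c : (G.induce s).Coloring α)
    (hK : G.IsClique K) (hKs : K ⊆ s) :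
    Function.Injective fun x : K ↦ c ⟨x, hKs x.2⟩ := by
  intro x y hxy
  by_contra hne
  exact c.valid (show (G.induce s).Adj ⟨x, hKs x.2⟩ ⟨y, hKs y.2⟩ from
    hK x.2 y.2 fun h ↦ hne (Subtype.ext h)) hxy

lemma Coloring.exists_perm_eq_on_isClique [Finite α] {s₁ s₂ K : Set V}
    (c₁ : (G.induce s₁).Coloring α) (c₂ : (G.induce s₂).Coloring α)
    (hK : G.IsClique K) (h₁ : K ⊆ s₁) (h₂ : K ⊆ s₂) :
    ∃ σ : Equiv.Perm α, ∀ x (hx : x ∈ K), σ (c₂ ⟨x, h₂ hx⟩) = c₁ ⟨x, h₁ hx⟩ := by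
  have inj₁ := c₁.injective_of_isClique hK h₁
  have : Finite K := .of_injective _ inj₁
  obtain ⟨σ, hσ⟩ :=
    Equiv.Perm.exists_extending_pair _ _ (c₂.injective_of_isClique hK h₂) inj₁
  exact ⟨σ, fun x hx ↦ hσ ⟨x, hx⟩⟩

lemma IsSeparation.exists_coloring [Finite α] {s₁ s₂ : Set V} (hS : G.IsSeparation s₁ s₂)
    (hK : G.IsClique (s₁ ∩ s₂)) (c₁ : (G.induce s₁).Coloring α)
    (c₂ : (G.induce s₂).Coloring α) : Nonempty (G.Coloring α) := by
  classical
  obtain ⟨σ, hσ⟩ := c₁.exists_perm_eq_on_isClique c₂ hK inter_subset_left inter_subset_right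
  have mem₂ : ∀ x, x ∉ s₁ → x ∈ s₂ := fun x hx ↦
    (hS.union_eq ▸ mem_univ x : x ∈ s₁ ∪ s₂).resolve_left hx
  let c : V → α := fun x ↦ if hx : x ∈ s₁ then c₁ ⟨x, hx⟩ else σ (c₂ ⟨x, mem₂ x hx⟩)
  have on₁ : ∀ x (hx : x ∈ s₁), c x = c₁ ⟨x, hx⟩ := fun x hx ↦ dif_pos hx
  have on₂ : ∀ x (hx : x ∈ s₂), c x = σ (c₂ ⟨x, hx⟩) := by
    intro x hx
    by_cases hx₁ : x ∈ s₁
    · exact (on₁ x hx₁).trans (hσ x ⟨hx₁, hx⟩).symm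
    · exact dif_neg hx₁
  refine ⟨Coloring.mk c fun {x y} hxy ↦ ?_⟩
  rcases hS.adj x y hxy with ⟨hx, hy⟩ | ⟨hx, hy⟩
  · rw [on₁ x hx, on₁ y hy]
    exact c₁.valid (show G.Adj x y from hxy)
  · rw [on₂ x hx, on₂ y hy, σ.injective.ne_iff]
    exact c₂.valid (show G.Adj x y from hxy)

lemma IsSeparation.colorable {n : ℕ} {s₁ s₂ : Set V} (hS : G.IsSeparation s₁ s₂)
    (hK : G.IsClique (s₁ ∩ s₂)) (h₁ : (G.induce s₁).Colorable n)
    (h₂ : (G.induce s₂).Colorable n) : G.Colorable n :=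
  hS.exists_coloring hK h₁.some h₂.some

/-- A component `A` of `G - C` yields the separation `(A ∪ C, V ∖ A)` with intersection `C`. -/
lemma exists_isSeparation_of_not_preconnected {C : Set V}
    (hC : ¬ (G.induce Cᶜ).Preconnected) :
    ∃ s₁ s₂, G.IsSeparation s₁ s₂ ∧ s₁ ∩ s₂ = C ∧ s₁ ≠ univ ∧ s₂ ≠ univ := by
  obtain ⟨u, v, huv⟩ : ∃ u v : ↥Cᶜ, ¬ (G.induce Cᶜ).Reachable u v := by
    simpa [Preconnected] using hC
  set A : Set V := Subtype.val '' {w | (G.induce Cᶜ).Reachable u w}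
  have hAC : A ⊆ Cᶜ := by rintro _ ⟨w, -, rfl⟩; exact w.2
  have closed : ∀ x y, G.Adj x y → x ∈ A → y ∈ A ∪ C := by
    rintro x y hxy ⟨x, hux, rfl⟩
    by_cases hy : y ∈ C
    · exact Or.inr hy
    · exact Or.inl ⟨⟨y, hy⟩, hux.trans (Adj.reachable (show G.Adj x y from hxy)), rfl⟩
  refine ⟨A ∪ C, Aᶜ, ⟨?_, fun x y hxy ↦ ?_⟩, ?_, ?_, ?_⟩
  · rw [union_right_comm, union_compl_self, univ_union]
  · by_cases hx : x ∈ A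
    · exact Or.inl ⟨Or.inl hx, closed x y hxy hx⟩
    by_cases hy : y ∈ A
    · exact Or.inl ⟨closed y x hxy.symm hy, Or.inl hy⟩
    · exact Or.inr ⟨hx, hy⟩
  · rw [union_inter_distrib_right, inter_compl_self, empty_union, inter_eq_left]
    exact fun x hxC hxA ↦ hAC hxA hxC
  · refine ne_univ_iff_exists_notMem _ |>.2 ⟨v, ?_⟩
    rintro (⟨w, huw, hw⟩ | hv)
    · exact huv (Subtype.ext hw ▸ huw)
    · exact v.2 hv
  · exact ne_univ_iff_exists_notMem _ |>.2 ⟨u, fun h ↦ h ⟨u, Reachable.refl _, rfl⟩⟩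

end SimpleGraph

lemma IsKCritical.not_colorable {V : Type*} {G : SimpleGraph V} {k : ℕ} (hk : 1 ≤ k)
    (hG : IsKCritical G k) : ¬ G.Colorable (k - 1) := fun h ↦ by
  have := hG.1 ▸ h.chromaticNumber_le
  norm_cast at this
  omega

theorem no_clique_cutset_of_critical_general {V : Type*}
    (G : SimpleGraph V) (k : ℕ) (hk : 1 ≤ k) (hG : IsKCritical G k) :
    ¬ ∃ C : Set V, G.IsClique C ∧ ¬ (G.induce (Cᶜ : Set V)).Preconnected := by
  rintro ⟨C, hC, hsep⟩
  obtain ⟨s₁, s₂, hS, rfl, h₁, h₂⟩ := exists_isSeparation_of_not_preconnected hsep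
  exact hG.not_colorable hk (hS.colorable hC (hG.2 s₁ h₁) (hG.2 s₂ h₂))

/-- A `k`-critical graph that is not complete has no clique cutset. -/
theorem no_clique_cutset_of_critical {V : Type*} [Fintype V]
    (G : SimpleGraph V) (k : ℕ) (hk : 1 ≤ k) (hG : IsKCritical G k)
    (hnc : G ≠ ⊤) :
    ¬ ∃ C : Set V, G.IsClique C ∧ ¬ (G.induce (Cᶜ : Set V)).Preconnected :=
  no_clique_cutset_of_critical_general G k hk hG
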